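/- Let k ≥ 3, ℓ ≥ 1. Let M = (α_1 ⋯ α_k) be a 2^ℓ × k complex matrix of rank 2 whose columns α_σ, α_τ (σ ≠ τ) are linearly independent, let X_{σ,τ} be the unique 2 × k matrix with (α_σ α_τ)·X_{σ,τ} = M, and let X'_{σ,τ} be an invertible k × k matrix with X_{σ,τ}·X'_{σ,τ} = [[1,0,0,…,0],[0,1,0,…,0]]. Let R_1,…,R_r be tensors of arity n on domain size k and G_1,…,G_g column tensors of arity n on domain size k, and suppose there are tensors R̲_i, G̲_j of arity n on domain size 2^ℓ with R_i = R̲_i M^{⊗n} for all i and M^{⊗n} G_j = G̲_j for all j. Define Ř_i as the restriction of R_i (X'_{σ,τ})^{⊗n} to {0,1}, and Ǧ_j as the restriction of (X'^{-1}_{σ,τ})^{⊗n} G_j to {0,1}. Then, with M_{(2)} = (α_σ α_τ) a 2^ℓ × 2 matrix of rank 2, it holds that Ř_i = R̲_i M_{(2)}^{⊗n} for all 1 ≤ i ≤ r and M_{(2)}^{⊗n} Ǧ_j = G̲_j for all 1 ≤ j ≤ g. -/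

import Mathlib

/-!
Composition of transforms is the tensor power of the matrix product, so
`R_i X'^{⊗n} = R̲_i (M X')^{⊗n}` and `(X'^{-1})^{⊗n} G_j` is sent to `G̲_j` by `(M X')^{⊗n}`.
Since `M X' = (α_σ α_τ) X X' = (α_σ α_τ) · [[1,0,0,…],[0,1,0,…]]`, the matrix `M X'` is
`(α_σ α_τ)` padded with zero columns. Restricting a recognizer to `{0,1}` keeps exactly the two
nonzero columns, and a generator transform by `M X'` only sees the values of its argument on
`{0,1}`; both give the transforms by `(α_σ α_τ)`.
-/

open Matrix BigOperators

/-- A tensor of arity `n` on domain size `k` is degenerate if it is a tensor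
product of vectors. -/
def Degenerate {n k : ℕ} (R : (Fin n → Fin k) → ℂ) : Prop :=
  ∃ v : Fin n → (Fin k → ℂ), ∀ i, R i = ∏ t, v t (i t)

/-- The recognizer transform `R̲ M^{⊗n}` of a tensor `R̲` on domain `D`
under a matrix `M` with rows indexed by `D` and columns indexed by `E`. -/
noncomputable def rtrans {n : ℕ} {D E : Type*} [Fintype D] (M : Matrix D E ℂ)
    (R : (Fin n → D) → ℂ) : (Fin n → E) → ℂ :=
  fun i => ∑ j : Fin n → D, R j * ∏ t, M (j t) (i t)

/-- The generator transform `M^{⊗n} G` of a column tensor `G` on domain `E`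
under a matrix `M` with rows indexed by `D` and columns indexed by `E`. -/
noncomputable def gtrans {n : ℕ} {D E : Type*} [Fintype E] (M : Matrix D E ℂ)
    (G : (Fin n → E) → ℂ) : (Fin n → D) → ℂ :=
  fun s => ∑ i : Fin n → E, (∏ t, M (s t) (i t)) * G i

/-- The restriction `R^{(σ,τ)}` of a tensor on domain size `k` to `{σ, τ}`. -/
def restrict {n k : ℕ} (R : (Fin n → Fin k) → ℂ) (σ τ : Fin k) :
    (Fin n → Fin 2) → ℂ :=
  fun j => R fun t => if j t = 0 then σ else τ

/-- The submatrix `(α_σ α_τ)` formed by the columns `σ` and `τ` of `M`. -/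
def subM {D : Type*} {k : ℕ} (M : Matrix D (Fin k) ℂ) (σ τ : Fin k) :
    Matrix D (Fin 2) ℂ :=
  Matrix.of fun i c => if c = 0 then M i σ else M i τ

/-- The `t`-th signature matrix `A_R(t)` of a tensor on domain size 2. -/
def sigMatrix {n : ℕ} (R : (Fin n → Fin 2) → ℂ) (t : Fin n) :
    Matrix (Fin 2) ({s : Fin n // s ≠ t} → Fin 2) ℂ :=
  Matrix.of fun b i => R fun s => if h : s = t then b else i ⟨s, h⟩

/-- The two-column matrix `A_{σ,τ}(R)`, with rows indexed by a position `t`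
and an assignment of domain values to the remaining positions. -/
def Amat {n k : ℕ} (R : (Fin n → Fin k) → ℂ) (σ τ : Fin k) :
    Matrix (Σ t : Fin n, ({s : Fin n // s ≠ t} → Fin k)) (Fin 2) ℂ :=
  Matrix.of fun p c =>
    R fun s => if h : s = p.1 then (if c = 0 then σ else τ) else p.2 ⟨s, h⟩

/-- The column vector `b_w(R)`. -/
def bvec {n k : ℕ} (R : (Fin n → Fin k) → ℂ) (w : Fin k) :
    (Σ t : Fin n, ({s : Fin n // s ≠ t} → Fin k)) → ℂ :=
  fun p => R fun s => if h : s = p.1 then w else p.2 ⟨s, h⟩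

/-- The `2 × k` matrix `[[1,0,0,…,0],[0,1,0,…,0]]`. -/
def projMat (k : ℕ) : Matrix (Fin 2) (Fin k) ℂ :=
  Matrix.of fun r c => if (r : ℕ) = (c : ℕ) then 1 else 0

section Transforms

variable {n : ℕ} {D E F : Type*}

lemma rtrans_rtrans [Fintype D] [Fintype E] (A : Matrix D E ℂ) (B : Matrix E F ℂ)
    (R : (Fin n → D) → ℂ) : rtrans B (rtrans A R) = rtrans (A * B) R := by
  funext i
  simp only [rtrans, Finset.sum_mul, mul_apply, Fintype.prod_sum]
  rw [Finset.sum_comm]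
  refine Finset.sum_congr rfl fun m _ => ?_
  simp only [Finset.mul_sum, mul_assoc, Finset.prod_mul_distrib]

lemma gtrans_gtrans [Fintype E] [Fintype F] (A : Matrix D E ℂ) (B : Matrix E F ℂ)
    (G : (Fin n → F) → ℂ) : gtrans A (gtrans B G) = gtrans (A * B) G := by
  funext s
  simp only [gtrans, Finset.mul_sum, mul_apply, Fintype.prod_sum]
  rw [Finset.sum_comm]
  refine Finset.sum_congr rfl fun m _ => ?_
  simp only [Finset.sum_mul, ← mul_assoc, Finset.prod_mul_distrib]

lemma restrict_rtrans [Fintype D] {k : ℕ} (A : Matrix D (Fin k) ℂ) (R : (Fin n → D) → ℂ)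
    (σ τ : Fin k) : restrict (rtrans A R) σ τ = rtrans (subM A σ τ) R := by
  funext j
  simp only [restrict, rtrans, subM, of_apply, apply_ite (A _)]

lemma gtrans_eq_gtrans_subM_restrict {k : ℕ} (A : Matrix D (Fin k) ℂ) {σ τ : Fin k}
    (hστ : σ ≠ τ) (hA : ∀ d c, c ≠ σ → c ≠ τ → A d c = 0) (G : (Fin n → Fin k) → ℂ) :
    gtrans A G = gtrans (subM A σ τ) (restrict G σ τ) := by
  funext s
  set φ : (Fin n → Fin 2) → Fin n → Fin k := fun j t => if j t = 0 then σ else τ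
  have hφ : Function.Injective φ := by
    intro x y hxy
    funext t
    have h := congrFun hxy t
    simp only [φ] at h
    split_ifs at h <;> omega
  have hvanish : ∀ i ∉ Finset.univ.image φ, (∏ t, A (s t) (i t)) * G i = 0 := by
    intro i hi
    obtain ⟨t, hσ, hτ⟩ : ∃ t, i t ≠ σ ∧ i t ≠ τ := by
      by_contra! h
      refine hi (Finset.mem_image.mpr ⟨fun t => if i t = σ then 0 else 1, Finset.mem_univ _, ?_⟩)
      funext t
      by_cases hit : i t = σ
      · simp [φ, hit]
      · simp [φ, h t hit, hστ.symm]
    rw [Finset.prod_eq_zero (Finset.mem_univ t) (hA _ _ hσ hτ), zero_mul]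
  simp only [gtrans]
  rw [← Finset.sum_subset (Finset.subset_univ _) fun i _ hi => hvanish i hi,
    Finset.sum_image fun x _ y _ h => hφ h]
  refine Finset.sum_congr rfl fun j _ => ?_
  simp only [subM, restrict, of_apply, φ, apply_ite (A _)]

end Transforms

section ProjMat

variable {D : Type*} {k : ℕ}

lemma mul_projMat_apply_of_two_le (N : Matrix D (Fin 2) ℂ) (d : D) {c : Fin k}
    (hc : 2 ≤ (c : ℕ)) : (N * projMat k) d c = 0 := by
  simp only [mul_apply, Fin.sum_univ_two, projMat, of_apply, Fin.val_zero, Fin.val_one]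
  rw [if_neg (by omega), if_neg (by omega), mul_zero, mul_zero, add_zero]

lemma subM_mul_projMat (hk : 2 ≤ k) (N : Matrix D (Fin 2) ℂ) :
    subM (N * projMat k) ⟨0, by omega⟩ ⟨1, by omega⟩ = N := by
  ext d c
  fin_cases c <;> simp [subM, mul_apply, projMat]

lemma gtrans_mul_projMat {n : ℕ} (hk : 2 ≤ k) (N : Matrix D (Fin 2) ℂ)
    (G : (Fin n → Fin k) → ℂ) :
    gtrans (N * projMat k) G = gtrans N (restrict G ⟨0, by omega⟩ ⟨1, by omega⟩) := by
  rw [gtrans_eq_gtrans_subM_restrict (σ := ⟨0, by omega⟩) (τ := ⟨1, by omega⟩) _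
    (by simp [Fin.ext_iff]), subM_mul_projMat hk]
  intro d c h0 h1
  refine mul_projMat_apply_of_two_le N d ?_
  simp only [ne_eq, Fin.ext_iff] at h0 h1
  omega

end ProjMat

lemma rank_subM_of_linearIndependent {D : Type*} [Fintype D] {k : ℕ}
    (M : Matrix D (Fin k) ℂ) {σ τ : Fin k}
    (hind : LinearIndependent ℂ ![(fun i => M i σ), (fun i => M i τ)]) :
    (subM M σ τ).rank = 2 := by
  have hcol : (subM M σ τ).col = ![(fun i => M i σ), (fun i => M i τ)] := by
    ext c d
    fin_cases c <;> rfl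
  rw [rank_eq_finrank_span_cols, hcol, finrank_span_eq_card hind, Fintype.card_fin]

/-- If the `R_i` and `G_j` are simultaneously realizable on a
rank-2 basis `M` with linearly independent columns `σ, τ`, then the checked
signatures `Ř_i` and `Ǧ_j` are simultaneously realizable on
`M_{(2)} = (α_σ α_τ)`, which has rank 2. -/
theorem checked_signatures_realizable {k ℓ n r g : ℕ} (hk : 3 ≤ k)
    (M : Matrix (Fin (2 ^ ℓ)) (Fin k) ℂ)
    (σ τ : Fin k)
    (hind : LinearIndependent ℂ ![(fun i => M i σ), (fun i => M i τ)])
    (X : Matrix (Fin 2) (Fin k) ℂ) (hX : subM M σ τ * X = M)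
    (X' : Matrix (Fin k) (Fin k) ℂ) (hinv : IsUnit X'.det)
    (hXX' : X * X' = projMat k)
    (R : Fin r → (Fin n → Fin k) → ℂ) (G : Fin g → (Fin n → Fin k) → ℂ)
    (R0 : Fin r → (Fin n → Fin (2 ^ ℓ)) → ℂ)
    (G0 : Fin g → (Fin n → Fin (2 ^ ℓ)) → ℂ)
    (hR : ∀ i, R i = rtrans M (R0 i)) (hG : ∀ j, gtrans M (G j) = G0 j) :
    (subM M σ τ).rank = 2 ∧
    (∀ i, restrict (rtrans X' (R i)) ⟨0, by omega⟩ ⟨1, by omega⟩ =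
        rtrans (subM M σ τ) (R0 i)) ∧
    (∀ j, gtrans (subM M σ τ)
        (restrict (gtrans X'⁻¹ (G j)) ⟨0, by omega⟩ ⟨1, by omega⟩) = G0 j) := by
  have hMX' : M * X' = subM M σ τ * projMat k := by
    rw [← hXX', ← Matrix.mul_assoc, hX]
  refine ⟨rank_subM_of_linearIndependent M hind, fun i => ?_, fun j => ?_⟩
  · rw [hR i, rtrans_rtrans, restrict_rtrans, hMX', subM_mul_projMat (by omega)]
  · rw [← gtrans_mul_projMat (by omega), gtrans_gtrans, ← hMX', Matrix.mul_assoc,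
      mul_nonsing_inv X' hinv, Matrix.mul_one, hG]
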